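/- arXiv:1307.7132 — 3 statements merged into one kernel-verified Lean document; each statement's English description precedes it below -/
import Mathlib

section
/- Let G be a locally finite, quasi-transitive directed graph, let S be a set of representatives of its transitivity classes, and let T = ∨_{s∈S} T(s) be the tree obtained by joining the disjoint SAW trees T(s), s ∈ S, at a common root. Then for every vertex w of T there exists a vertex w' at distance at most 1 from the root such that there is an injective graph homomorphism from the subtree T^w into T^{w'} mapping w to w'. -/
open Filter ENNReal

structure Dgraph where
  V : Type
  E : Type
  src : E → V
  tgt : E → V

namespace Dgraph

variable (G : Dgraph)

/-- Every vertex has finite in-degree and out-degree. -/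
def LocallyFinite : Prop :=
  ∀ v : G.V, {e : G.E | G.src e = v}.Finite ∧ {e : G.E | G.tgt e = v}.Finite

/-- There is a directed edge from `u` to `v`. -/
def Adj (u v : G.V) : Prop := ∃ e : G.E, G.src e = u ∧ G.tgt e = v

/-- Directed walks exist between any ordered pair of vertices. -/
def StronglyConnected : Prop := ∀ u v : G.V, Relation.ReflTransGen G.Adj u v

/-- An automorphism of a directed multigraph. -/
structure Aut where
  vmap : G.V ≃ G.V
  emap : G.E ≃ G.E
  src_eq : ∀ e, G.src (emap e) = vmap (G.src e)
  tgt_eq : ∀ e, G.tgt (emap e) = vmap (G.tgt e)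

/-- `u` and `v` are in the same transitivity class. -/
def SameOrbit (u v : G.V) : Prop := ∃ φ : G.Aut, φ.vmap u = v

/-- Finitely many transitivity classes. -/
def QuasiTransitive : Prop := ∃ S : Finset G.V, ∀ v : G.V, ∃ s ∈ S, G.SameOrbit s v

def VertexTransitive : Prop := ∀ u v : G.V, G.SameOrbit u v

/-- The orbit of `v` under the stabiliser of `u`. -/
def stabOrbit (u v : G.V) : Set G.V := {w | ∃ φ : G.Aut, φ.vmap u = u ∧ φ.vmap v = w}

/-- Unimodularity: the weight function is constant on transitivity classes,
equivalently `|stab(u)v| = |stab(v)u|` whenever `u, v` are in the same orbit. -/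
def Unimodular : Prop := ∀ u v : G.V, G.SameOrbit u v →
  Nat.card (G.stabOrbit u v) = Nat.card (G.stabOrbit v u)

/-- The edge-reversal of `G`. -/
def rev : Dgraph := ⟨G.V, G.E, G.tgt, G.src⟩

/-- Each edge has a reverse edge: `G` represents an undirected graph. -/
def Undirected : Prop := ∃ ι : G.E ≃ G.E, ∀ e : G.E,
  G.src (ι e) = G.tgt e ∧ G.tgt (ι e) = G.src e ∧ ι (ι e) = e

/-- An `n`-step self-avoiding walk starting at `v`, directed away from `v`. -/
@[ext]
structure SAW (n : ℕ) (v : G.V) where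
  vs : Fin (n + 1) → G.V
  es : Fin n → G.E
  hsrc : ∀ i : Fin n, G.src (es i) = vs i.castSucc
  htgt : ∀ i : Fin n, G.tgt (es i) = vs i.succ
  hstart : vs 0 = v
  hinj : Function.Injective vs

/-- `w` is an initial segment of a singly infinite SAW from `v`. -/
def IsFwdExt {n : ℕ} {v : G.V} (w : G.SAW n v) : Prop :=
  ∃ (vs : ℕ → G.V) (es : ℕ → G.E), Function.Injective vs ∧
    (∀ i : ℕ, G.src (es i) = vs i ∧ G.tgt (es i) = vs (i + 1)) ∧
    (∀ i : Fin (n + 1), vs i = w.vs i) ∧ (∀ i : Fin n, es i = w.es i)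

/-- `w` is the final segment of a singly infinite SAW from infinity ending at the
endpoint of `w` (indexed backwards from the endpoint). -/
def IsBwdExt {n : ℕ} {v : G.V} (w : G.SAW n v) : Prop :=
  ∃ (vs : ℕ → G.V) (es : ℕ → G.E), Function.Injective vs ∧
    (∀ i : ℕ, G.src (es i) = vs (i + 1) ∧ G.tgt (es i) = vs i) ∧
    (∀ i : Fin (n + 1), vs (n - (i : ℕ)) = w.vs i) ∧
    (∀ i : Fin n, es (n - 1 - (i : ℕ)) = w.es i)

/-- `w` is a sub-walk of a doubly infinite SAW. -/
def IsDblExt {n : ℕ} {v : G.V} (w : G.SAW n v) : Prop :=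
  ∃ (vs : ℤ → G.V) (es : ℤ → G.E), Function.Injective vs ∧
    (∀ i : ℤ, G.src (es i) = vs i ∧ G.tgt (es i) = vs (i + 1)) ∧
    ∃ k : ℤ, (∀ i : Fin (n + 1), vs (k + (i : ℕ)) = w.vs i) ∧
      (∀ i : Fin n, es (k + (i : ℕ)) = w.es i)

noncomputable def sigma (n : ℕ) (v : G.V) : ℕ := Nat.card (G.SAW n v)
noncomputable def sigmaF (n : ℕ) (v : G.V) : ℕ := Nat.card {w : G.SAW n v // G.IsFwdExt w}
noncomputable def sigmaB (n : ℕ) (v : G.V) : ℕ := Nat.card {w : G.SAW n v // G.IsBwdExt w}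
noncomputable def sigmaFB (n : ℕ) (v : G.V) : ℕ := Nat.card {w : G.SAW n v // G.IsDblExt w}

noncomputable def ssigma (n : ℕ) : ℝ≥0∞ := ⨆ v : G.V, (G.sigma n v : ℝ≥0∞)
noncomputable def ssigmaF (n : ℕ) : ℝ≥0∞ := ⨆ v : G.V, (G.sigmaF n v : ℝ≥0∞)
noncomputable def ssigmaB (n : ℕ) : ℝ≥0∞ := ⨆ v : G.V, (G.sigmaB n v : ℝ≥0∞)
noncomputable def ssigmaFB (n : ℕ) : ℝ≥0∞ := ⨆ v : G.V, (G.sigmaFB n v : ℝ≥0∞)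

/-- Undirected graph distance: length of a shortest path ignoring orientations. -/
noncomputable def udist (u v : G.V) : ℕ :=
  sInf {n : ℕ | ∃ f : Fin (n + 1) → G.V, f 0 = u ∧ f (Fin.last n) = v ∧
    ∀ i : Fin n, (∃ e, G.src e = f i.castSucc ∧ G.tgt e = f i.succ) ∨
      (∃ e, G.src e = f i.succ ∧ G.tgt e = f i.castSucc)}

end Dgraph

open Filter ENNReal

attribute [local instance] Classical.propDecidable

/-- A rooted tree, given by a parent function under which every vertex reaches the root. -/
structure RTree where
  V : Type
  root : V
  parent : V → V
  parent_root : parent root = root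
  reach : ∀ v : V, ∃ n : ℕ, parent^[n] v = root

namespace RTree

variable (T : RTree)

/-- Distance from the root. -/
noncomputable def depth (v : T.V) : ℕ := Nat.find (T.reach v)

/-- Every vertex has finitely many children. -/
def LocFin : Prop := ∀ v : T.V, {u : T.V | T.parent u = v ∧ u ≠ v}.Finite

/-- The set of vertices at distance `n` from the root. -/
def level (n : ℕ) : Set T.V := {v | T.depth v = n}

/-- Removing the edges below the vertices in `P` leaves the root in a finite component.
(Edges are identified with their endpoints farther from the root.) -/
def Separates (P : Set T.V) : Prop :=
  T.root ∉ P ∧ {v : T.V | ∀ k : ℕ, T.parent^[k] v ∉ P}.Finite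

/-- A cutset: a minimal set of edges whose removal leaves the root in a finite component. -/
def IsCutset (P : Set T.V) : Prop :=
  T.Separates P ∧ ∀ Q : Set T.V, Q ⊂ P → ¬ T.Separates Q

/-- The branching number `br T = sup {λ : inf_Π Σ_{e∈Π} λ^{-|e|} > 0}`. -/
noncomputable def br : ℝ≥0∞ :=
  sSup {lam : ℝ≥0∞ | ∃ ε : ℝ≥0∞, 0 < ε ∧ ∀ P : Set T.V, T.IsCutset P →
    ε ≤ ∑' e : P, lam⁻¹ ^ (T.depth e.val)}

/-- `v` is a descendant of `w` (or `w` itself). -/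
def Desc (w v : T.V) : Prop := ∃ k : ℕ, T.parent^[k] v = w

/-- `T` is `N`-subperiodic: every subtree embeds in a subtree rooted within distance `N`
of the root. -/
def Subperiodic (N : ℕ) : Prop :=
  ∀ w : T.V, ∃ w' : T.V, T.depth w' ≤ N ∧ ∃ f : T.V → T.V,
    f w = w' ∧ Set.InjOn f {v | T.Desc w v} ∧
    (∀ v, T.Desc w v → T.Desc w' (f v)) ∧
    (∀ v, T.Desc w v → v ≠ w → f (T.parent v) = T.parent (f v))

/-- The subtree of `w` and its descendants. -/
def SubtreeSet (w : T.V) : Set T.V := {v | T.Desc w v}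

/-- The tree obtained by removing every vertex whose subtree is finite. -/
noncomputable def prune (h : Infinite T.V) : RTree :=
  let Vp := {v : T.V // (T.SubtreeSet v).Infinite}
  let pp : Vp → Vp := fun v => ⟨T.parent v.val, by
    refine v.prop.mono ?_
    rintro u ⟨k, hk⟩
    exact ⟨k + 1, by rw [Function.iterate_succ_apply', hk]⟩⟩
  { V := Vp
    root := ⟨T.root, by
      have huniv : T.SubtreeSet T.root = Set.univ := by
        ext u
        simpa [SubtreeSet, Desc] using T.reach u
      rw [huniv]
      exact Set.infinite_univ⟩
    parent := pp
    parent_root := Subtype.ext T.parent_root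
    reach := by
      have key : ∀ (n : ℕ) (v : Vp), (pp^[n] v).val = T.parent^[n] v.val := by
        intro n
        induction n with
        | zero => intro v; rfl
        | succ k ih =>
            intro v
            rw [Function.iterate_succ_apply, Function.iterate_succ_apply]
            exact ih (pp v)
      rintro ⟨v, hv⟩
      obtain ⟨n, hn⟩ := T.reach v
      exact ⟨n, Subtype.ext (by rw [key]; exact hn)⟩ }

end RTree

/-- The tree obtained by joining the roots of the trees `Ts i` to a new root. -/
noncomputable def joinTrees {ι : Type} (Ts : ι → RTree) : RTree :=
  let Vj := Option (Σ i : ι, (Ts i).V)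
  let pj : Vj → Vj := fun x => match x with
    | none => none
    | some ⟨i, v⟩ => if v = (Ts i).root then none else some ⟨i, (Ts i).parent v⟩
  { V := Vj
    root := none
    parent := pj
    parent_root := rfl
    reach := by
      have key : ∀ (i : ι) (n : ℕ) (v : (Ts i).V), (Ts i).parent^[n] v = (Ts i).root →
          ∃ m : ℕ, pj^[m] (some ⟨i, v⟩) = none := by
        intro i n
        induction n with
        | zero =>
            intro v hv
            simp only [Function.iterate_zero_apply] at hv
            exact ⟨1, by simp [pj, hv]⟩
        | succ k ih =>
            intro v hv
            by_cases hr : v = (Ts i).root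
            · exact ⟨1, by simp [pj, hr]⟩
            · obtain ⟨m, hm⟩ := ih ((Ts i).parent v)
                (by rw [← Function.iterate_succ_apply]; exact hv)
              refine ⟨m + 1, ?_⟩
              rw [Function.iterate_succ_apply]
              simpa [pj, hr] using hm
      rintro (_ | ⟨i, v⟩)
      · exact ⟨0, rfl⟩
      · obtain ⟨n, hn⟩ := (Ts i).reach v
        exact key i n v hn }

namespace Dgraph

variable {G : Dgraph}

/-- The trivial (length-0) SAW at `v`. -/
def SAW.nil (G : Dgraph) (v : G.V) : G.SAW 0 v where
  vs _ := v
  es i := i.elim0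
  hsrc i := i.elim0
  htgt i := i.elim0
  hstart := rfl
  hinj a b _ := by
    haveI : Subsingleton (Fin (0 + 1)) := Fin.subsingleton_one
    exact Subsingleton.elim a b

/-- The truncation of a SAW to its first `m` steps. -/
def SAW.take {n : ℕ} {v : G.V} (w : G.SAW n v) (m : ℕ) (hm : m ≤ n) : G.SAW m v where
  vs i := w.vs ⟨i.val, by have := i.isLt; omega⟩
  es i := w.es ⟨i.val, by have := i.isLt; omega⟩
  hsrc i := w.hsrc ⟨i.val, by have := i.isLt; omega⟩
  htgt i := w.htgt ⟨i.val, by have := i.isLt; omega⟩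
  hstart := w.hstart
  hinj a b hab := by
    have h := w.hinj hab
    have hv := congrArg Fin.val h
    exact Fin.ext hv

/-- The SAW obtained by removing the last step. -/
def SAW.init {n : ℕ} {v : G.V} (w : G.SAW (n + 1) v) : G.SAW n v :=
  w.take n (Nat.le_succ n)

/-- The walk `p` extends the walk `w`. -/
def ExtendsW {n : ℕ} {v : G.V} (w : G.SAW n v) (p : Σ m : ℕ, G.SAW m v) : Prop :=
  ∃ _ : n ≤ p.1, (∀ i : Fin (n + 1), p.2.vs ⟨i.val, by have := i.isLt; omega⟩ = w.vs i) ∧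
    (∀ i : Fin n, p.2.es ⟨i.val, by have := i.isLt; omega⟩ = w.es i)

/-- The SAW tree of `G` at `v`: vertices are the finite SAWs from `v`, and each
nontrivial walk's parent is obtained by removing its last step. -/
noncomputable def sawTree (G : Dgraph) (v : G.V) : RTree :=
  let Vt := Σ n : ℕ, G.SAW n v
  let pt : Vt → Vt := fun x => match x with
    | ⟨0, _⟩ => ⟨0, SAW.nil G v⟩
    | ⟨n + 1, w⟩ => ⟨n, w.init⟩
  { V := Vt
    root := ⟨0, SAW.nil G v⟩
    parent := pt
    parent_root := rfl
    reach := by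
      have key : ∀ (n : ℕ) (w : G.SAW n v), pt^[n + 1] ⟨n, w⟩ = ⟨0, SAW.nil G v⟩ := by
        intro n
        induction n with
        | zero =>
            intro w
            have hw : w = SAW.nil G v := by
              ext i
              · have h0 : i = 0 := by
                  haveI : Subsingleton (Fin (0 + 1)) := Fin.subsingleton_one
                  exact Subsingleton.elim i 0
                rw [h0, w.hstart]; rfl
              · exact i.elim0
            rw [hw]
            simp [pt]
        | succ k ih =>
            intro w
            rw [Function.iterate_succ_apply]
            exact ih w.init
      exact fun x => ⟨x.1 + 1, key x.1 x.2⟩ }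

end Dgraph

namespace SubperAux

open Dgraph

variable {G : Dgraph}

lemma saw_zero_eq {v : G.V} (p q : G.SAW 0 v) : p = q := by
  ext i
  · haveI : Subsingleton (Fin (0 + 1)) := Fin.subsingleton_one
    rw [Subsingleton.elim i 0, p.hstart, q.hstart]
  · exact i.elim0

lemma src_symm (φ : G.Aut) (e : G.E) : G.src (φ.emap.symm e) = φ.vmap.symm (G.src e) := by
  apply φ.vmap.injective
  rw [← φ.src_eq, Equiv.apply_symm_apply, Equiv.apply_symm_apply]

lemma tgt_symm (φ : G.Aut) (e : G.E) : G.tgt (φ.emap.symm e) = φ.vmap.symm (G.tgt e) := by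
  apply φ.vmap.injective
  rw [← φ.tgt_eq, Equiv.apply_symm_apply, Equiv.apply_symm_apply]

/-- Drop the first `n` steps of `p` and pull back along the automorphism `φ`. -/
def pull {n m : ℕ} {u s' : G.V} (φ : G.Aut) (p : G.SAW m u) (hm : n ≤ m)
    (hv : p.vs ⟨n, Nat.lt_succ_of_le hm⟩ = φ.vmap s') : G.SAW (m - n) s' where
  vs j := φ.vmap.symm (p.vs ⟨n + j.val, by have := j.isLt; omega⟩)
  es j := φ.emap.symm (p.es ⟨n + j.val, by have := j.isLt; omega⟩)
  hsrc j := by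
    rw [src_symm]
    refine congrArg _ ?_
    rw [p.hsrc ⟨n + j.val, by have := j.isLt; omega⟩]
    exact congrArg p.vs (Fin.ext rfl)
  htgt j := by
    rw [tgt_symm]
    refine congrArg _ ?_
    rw [p.htgt ⟨n + j.val, by have := j.isLt; omega⟩]
    exact congrArg p.vs (Fin.ext (by simp [Fin.val_succ]; omega))
  hstart := by
    have h0 : (⟨n + ((0 : Fin (m - n + 1)) : ℕ), by omega⟩ : Fin (m + 1)) =
        ⟨n, Nat.lt_succ_of_le hm⟩ := Fin.ext (by simp)
    show φ.vmap.symm (p.vs _) = s'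
    rw [h0, hv, Equiv.symm_apply_apply]
  hinj a b h := by
    have h1 : p.vs ⟨n + a.val, by have := a.isLt; omega⟩ =
        p.vs ⟨n + b.val, by have := b.isLt; omega⟩ := φ.vmap.symm.injective h
    have h2 := congrArg Fin.val (p.hinj h1)
    exact Fin.ext (by simpa using h2)

/-- The candidate subtree embedding. -/
noncomputable def pullMap (n : ℕ) (φ : G.Aut) {S : Finset G.V} (s' : ↥S)
    (x : Option (Σ s : ↥S, Σ k, G.SAW k s.val)) :
    Option (Σ s : ↥S, Σ k, G.SAW k s.val) :=
  x.elim (some ⟨s', ⟨0, SAW.nil G s'.val⟩⟩) (fun y =>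
    if h : ∃ hm : n ≤ y.2.1, y.2.2.vs ⟨n, Nat.lt_succ_of_le hm⟩ = φ.vmap s'.val then
      some ⟨s', ⟨y.2.1 - n, pull φ y.2.2 h.choose h.choose_spec⟩⟩
    else some ⟨s', ⟨0, SAW.nil G s'.val⟩⟩)

lemma pullMap_pos (n : ℕ) (φ : G.Aut) {S : Finset G.V} (s' : ↥S) (t : ↥S) {m : ℕ}
    (p : G.SAW m t.val) (hm : n ≤ m)
    (hv : p.vs ⟨n, Nat.lt_succ_of_le hm⟩ = φ.vmap s'.val) :
    pullMap n φ s' (some ⟨t, ⟨m, p⟩⟩) = some ⟨s', ⟨m - n, pull φ p hm hv⟩⟩ := by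
  show dite _ _ _ = _
  rw [dif_pos ⟨hm, hv⟩]

lemma pullMap_none (n : ℕ) (φ : G.Aut) {S : Finset G.V} (s' : ↥S) :
    pullMap n φ s' none = some ⟨s', ⟨0, SAW.nil G s'.val⟩⟩ := rfl

section Join

variable {S : Finset G.V}

lemma st_root (u : G.V) : (sawTree G u).root = ⟨0, SAW.nil G u⟩ := rfl

lemma pj_none :
    (joinTrees (fun s : ↥S => sawTree G s.val)).parent none = none := rfl

lemma pj_some (t : ↥S) (y : Σ k, G.SAW k t.val) :
    (joinTrees (fun s : ↥S => sawTree G s.val)).parent (some ⟨t, y⟩) =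
      @ite _ (y = (sawTree G t.val).root) (Classical.propDecidable _) none
        (some ⟨t, (sawTree G t.val).parent y⟩) := rfl

lemma pj_zero (t : ↥S) (q : G.SAW 0 t.val) :
    (joinTrees (fun s : ↥S => sawTree G s.val)).parent (some ⟨t, ⟨0, q⟩⟩) = none := by
  rw [pj_some, if_pos]
  rw [st_root]
  exact congrArg _ (saw_zero_eq q _)

lemma pj_succ (t : ↥S) (m : ℕ) (q : G.SAW (m + 1) t.val) :
    (joinTrees (fun s : ↥S => sawTree G s.val)).parent (some ⟨t, ⟨m + 1, q⟩⟩) =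
      some ⟨t, ⟨m, q.init⟩⟩ := by
  have hne : (⟨m + 1, q⟩ : Σ k, G.SAW k t.val) ≠ (sawTree G t.val).root := by
    intro hcon
    rw [st_root] at hcon
    exact Nat.succ_ne_zero m (congrArg Sigma.fst hcon)
  rw [pj_some, if_neg hne]
  rfl

lemma pj_iter_none (k : ℕ) :
    (joinTrees (fun s : ↥S => sawTree G s.val)).parent^[k] none = none :=
  Function.iterate_fixed rfl k

lemma take_self {m : ℕ} {u : G.V} (p : G.SAW m u) (h : m ≤ m) : p.take m h = p := rfl

lemma iter_to_root (t : ↥S) : ∀ (l : ℕ) (q : G.SAW l t.val),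
    (joinTrees (fun s : ↥S => sawTree G s.val)).parent^[l] (some ⟨t, ⟨l, q⟩⟩) =
      some ⟨t, ⟨0, SAW.nil G t.val⟩⟩
  | 0, q => by
      erw [Function.iterate_zero_apply, saw_zero_eq q (SAW.nil G t.val)]
  | (l + 1), q => by
      erw [Function.iterate_succ_apply, pj_succ, iter_to_root t l q.init]

lemma desc_struct (t : ↥S) (n : ℕ) (ω : G.SAW n t.val) :
    ∀ (k : ℕ) (x : Option (Σ s : ↥S, Σ l, G.SAW l s.val)),
    (joinTrees (fun s : ↥S => sawTree G s.val)).parent^[k] x = some ⟨t, ⟨n, ω⟩⟩ →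
    ∃ (m : ℕ) (p : G.SAW m t.val) (hm : n ≤ m),
      x = some ⟨t, ⟨m, p⟩⟩ ∧ p.take n hm = ω := by
  intro k
  induction k with
  | zero =>
      intro x h
      erw [Function.iterate_zero_apply] at h
      exact ⟨n, ω, le_refl n, h, take_self ω (le_refl n)⟩
  | succ k ih =>
      intro x h
      erw [Function.iterate_succ_apply] at h
      rcases x with _ | ⟨t', ⟨m', p'⟩⟩
      · erw [pj_none, pj_iter_none] at h
        exact (Option.some_ne_none _ h.symm).elim
      · rcases m' with _ | m0
        · erw [pj_zero, pj_iter_none] at h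
          exact (Option.some_ne_none _ h.symm).elim
        · erw [pj_succ] at h
          obtain ⟨m, p, hm, heq, htp⟩ := ih _ h
          obtain ⟨ht, hsnd⟩ := Sigma.mk.inj_iff.mp (Option.some.inj heq)
          subst ht
          obtain ⟨hm0, hp⟩ := Sigma.mk.inj_iff.mp (eq_of_heq hsnd)
          subst hm0
          have hp' : p = p'.init := (eq_of_heq hp).symm
          subst hp'
          exact ⟨m0 + 1, p', le_trans hm (Nat.le_succ m0), rfl, htp⟩

lemma sigma_saw_ext {c : G.V} : ∀ {a b : ℕ}, a = b → ∀ (q : G.SAW a c) (r : G.SAW b c),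
    (∀ (i : ℕ) (hia : i < a + 1) (hib : i < b + 1), q.vs ⟨i, hia⟩ = r.vs ⟨i, hib⟩) →
    (∀ (i : ℕ) (hia : i < a) (hib : i < b), q.es ⟨i, hia⟩ = r.es ⟨i, hib⟩) →
    (⟨a, q⟩ : Σ k, G.SAW k c) = ⟨b, r⟩ := by
  rintro a _ rfl q r hvs hes
  refine congrArg _ (Dgraph.SAW.ext ?_ ?_)
  · funext i
    exact hvs i.val i.isLt i.isLt
  · funext i
    exact hes i.val i.isLt i.isLt

lemma sigma_to_nil {c : G.V} : ∀ {a : ℕ}, a = 0 → ∀ (q : G.SAW a c),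
    (⟨a, q⟩ : Σ k, G.SAW k c) = ⟨0, SAW.nil G c⟩ := by
  rintro _ rfl q
  rw [saw_zero_eq q (SAW.nil G c)]

lemma pj_pos (t : ↥S) {a : ℕ} (q : G.SAW a t.val) (ha : a ≠ 0) :
    (joinTrees (fun s : ↥S => sawTree G s.val)).parent (some ⟨t, ⟨a, q⟩⟩) =
      some ⟨t, ⟨a - 1, q.take (a - 1) (Nat.sub_le a 1)⟩⟩ := by
  cases a with
  | zero => exact absurd rfl ha
  | succ b => rw [pj_succ]; rfl

end Join

end SubperAux

open Dgraph in
/-- the join over transitivity-class representatives of the SAW trees of a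
locally finite quasi-transitive directed graph is 1-subperiodic. -/
theorem sawTree_join_subperiodic (G : Dgraph) (hlf : G.LocallyFinite)
    (hqt : G.QuasiTransitive) (S : Finset G.V)
    (hrep : ∀ v : G.V, ∃ s ∈ S, G.SameOrbit s v)
    (huniq : ∀ s ∈ S, ∀ s' ∈ S, G.SameOrbit s s' → s = s') :
    (joinTrees (fun s : ↥S => sawTree G s.val)).Subperiodic 1 := by
  intro w
  rcases w with _ | ⟨t, ⟨n, ω⟩⟩
  · -- the root itself
    refine ⟨none, ?_, id, rfl, ?_, ?_, ?_⟩
    · have h0 : (joinTrees (fun s : ↥S => sawTree G s.val)).depth none ≤ 0 :=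
        Nat.find_min' _ rfl
      omega
    · intro a _ b _ h; exact h
    · intro v _
      exact (joinTrees (fun s : ↥S => sawTree G s.val)).reach v
    · intro v _ _; rfl
  · obtain ⟨s', hs'S, φ, hφ⟩ := hrep (ω.vs (Fin.last n))
    have hvω : ω.vs ⟨n, Nat.lt_succ_of_le (le_refl n)⟩ =
        φ.vmap (⟨s', hs'S⟩ : ↥S).val := hφ.symm
    refine ⟨some ⟨⟨s', hs'S⟩, ⟨0, SAW.nil G s'⟩⟩, ?_, SubperAux.pullMap n φ ⟨s', hs'S⟩,
      ?_, ?_, ?_, ?_⟩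
    · -- depth ≤ 1
      have h1 : (joinTrees (fun s : ↥S => sawTree G s.val)).parent^[1]
          (some ⟨⟨s', hs'S⟩, ⟨0, SAW.nil G s'⟩⟩) =
          (joinTrees (fun s : ↥S => sawTree G s.val)).root := by
        rw [Function.iterate_one, SubperAux.pj_zero]
        rfl
      exact Nat.find_min' _ h1
    · -- maps w to w'
      erw [SubperAux.pullMap_pos n φ ⟨s', hs'S⟩ t ω (le_refl n) hvω]
      exact congrArg some (congrArg _ (SubperAux.sigma_to_nil (Nat.sub_self n) _))
    · -- injective on descendants
      intro x hx y hy hxy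
      obtain ⟨kx, hkx⟩ := hx
      obtain ⟨m, p, hm, hxeq, htp⟩ := SubperAux.desc_struct t n ω kx x hkx
      obtain ⟨ky, hky⟩ := hy
      obtain ⟨m', p', hm', hyeq, htp'⟩ := SubperAux.desc_struct t n ω ky y hky
      subst hxeq; subst hyeq
      have hvp : p.vs ⟨n, Nat.lt_succ_of_le hm⟩ = φ.vmap (⟨s', hs'S⟩ : ↥S).val := by
        calc p.vs ⟨n, Nat.lt_succ_of_le hm⟩ = (p.take n hm).vs (Fin.last n) := rfl
          _ = ω.vs (Fin.last n) := by rw [htp]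
          _ = φ.vmap (⟨s', hs'S⟩ : ↥S).val := hφ.symm
      have hvp' : p'.vs ⟨n, Nat.lt_succ_of_le hm'⟩ = φ.vmap (⟨s', hs'S⟩ : ↥S).val := by
        calc p'.vs ⟨n, Nat.lt_succ_of_le hm'⟩ = (p'.take n hm').vs (Fin.last n) := rfl
          _ = ω.vs (Fin.last n) := by rw [htp']
          _ = φ.vmap (⟨s', hs'S⟩ : ↥S).val := hφ.symm
      rw [SubperAux.pullMap_pos n φ ⟨s', hs'S⟩ t p hm hvp,
        SubperAux.pullMap_pos n φ ⟨s', hs'S⟩ t p' hm' hvp'] at hxy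
      have h3 := eq_of_heq (Sigma.mk.inj_iff.mp (Option.some.inj hxy)).2
      have h4 : m - n = m' - n := (Sigma.mk.inj_iff.mp h3).1
      have hmm : m = m' := by omega
      subst hmm
      have h5 : SubperAux.pull φ p hm hvp = SubperAux.pull φ p' hm' hvp' :=
        eq_of_heq (Sigma.mk.inj_iff.mp h3).2
      have hpp : p = p' := by
        refine Dgraph.SAW.ext ?_ ?_
        · funext i
          rcases Nat.lt_or_ge i.val (n + 1) with hi | hi
          · have h1 : (p.take n hm).vs ⟨i.val, hi⟩ = (p'.take n hm').vs ⟨i.val, hi⟩ := by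
              rw [htp, htp']
            exact h1
          · have hle : i.val - n < m - n + 1 := by have := i.isLt; omega
            have h2 := congrArg (fun q : G.SAW (m - n) s' => q.vs ⟨i.val - n, hle⟩) h5
            have h3' := φ.vmap.symm.injective h2
            have hidx : i = ⟨n + (i.val - n), by have := i.isLt; omega⟩ :=
              Fin.ext (show i.val = n + (i.val - n) by omega)
            rw [hidx]
            exact h3'
        · funext i
          rcases Nat.lt_or_ge i.val n with hi | hi
          · have h1 : (p.take n hm).es ⟨i.val, hi⟩ = (p'.take n hm').es ⟨i.val, hi⟩ := by
              rw [htp, htp']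
            exact h1
          · have hle : i.val - n < m - n := by have := i.isLt; omega
            have h2 := congrArg (fun q : G.SAW (m - n) s' => q.es ⟨i.val - n, hle⟩) h5
            have h3' := φ.emap.symm.injective h2
            have hidx : i = ⟨n + (i.val - n), by have := i.isLt; omega⟩ :=
              Fin.ext (show i.val = n + (i.val - n) by omega)
            rw [hidx]
            exact h3'
      rw [hpp]
    · -- descendants map to descendants
      intro v _
      rcases v with _ | ⟨t0, ⟨m0, p0⟩⟩
      · exact ⟨0, rfl⟩
      · by_cases hc : ∃ hm : n ≤ m0,
            p0.vs ⟨n, Nat.lt_succ_of_le hm⟩ = φ.vmap (⟨s', hs'S⟩ : ↥S).val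
        · obtain ⟨hm, hv⟩ := hc
          erw [SubperAux.pullMap_pos n φ ⟨s', hs'S⟩ t0 p0 hm hv]
          exact ⟨m0 - n, SubperAux.iter_to_root ⟨s', hs'S⟩ (m0 - n) _⟩
        · have hneg : SubperAux.pullMap n φ (⟨s', hs'S⟩ : ↥S) (some ⟨t0, ⟨m0, p0⟩⟩) =
              some ⟨⟨s', hs'S⟩, ⟨0, SAW.nil G s'⟩⟩ := by
            show dite _ _ _ = _
            rw [dif_neg hc]
          erw [hneg]
          exact ⟨0, rfl⟩
    · -- commutes with parent
      intro v hv hne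
      obtain ⟨k, hk⟩ := hv
      obtain ⟨m, p, hm, hveq, htp⟩ := SubperAux.desc_struct t n ω k v hk
      subst hveq
      have hvp : p.vs ⟨n, Nat.lt_succ_of_le hm⟩ = φ.vmap (⟨s', hs'S⟩ : ↥S).val := by
        calc p.vs ⟨n, Nat.lt_succ_of_le hm⟩ = (p.take n hm).vs (Fin.last n) := rfl
          _ = ω.vs (Fin.last n) := by rw [htp]
          _ = φ.vmap (⟨s', hs'S⟩ : ↥S).val := hφ.symm
      have hlt : n < m := by
        rcases Nat.lt_or_ge n m with h | h
        · exact h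
        · have hnm : n = m := le_antisymm hm h
          subst hnm
          have hp : p = ω := by rw [← SubperAux.take_self p hm]; exact htp
          exact absurd (by rw [hp]; rfl) hne
      obtain ⟨m0, rfl⟩ : ∃ m0, m = m0 + 1 := ⟨m - 1, by omega⟩
      erw [SubperAux.pj_succ]
      have hm0 : n ≤ m0 := by omega
      have hvp0 : p.init.vs ⟨n, Nat.lt_succ_of_le hm0⟩ =
          φ.vmap (⟨s', hs'S⟩ : ↥S).val := hvp
      erw [SubperAux.pullMap_pos n φ ⟨s', hs'S⟩ t p.init hm0 hvp0,
        SubperAux.pullMap_pos n φ ⟨s', hs'S⟩ t p hm hvp,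
        SubperAux.pj_pos ⟨s', hs'S⟩ _ (by omega)]
      refine congrArg some (congrArg _ ?_)
      exact SubperAux.sigma_saw_ext (by omega) _ _ (fun i hia hib => rfl)
        (fun i hia hib => rfl)
end

section
/- Let G be an infinite, locally finite, strongly connected, quasi-transitive directed graph. Then the limits μ^F = lim_n (sup_v σ^F_n(v))^{1/n} and μ = lim_n (sup_v σ_n(v))^{1/n} exist and μ^F = μ, where σ^F_n(v) counts forward extendable n-step SAWs from v. -/
open Filter ENNReal

open Filter ENNReal

attribute [local instance] Classical.propDecidable

/-! The sequence `σ_n = sup_v σ_n(v)` is submultiplicative, so by Fekete's lemma `σ_n^{1/n} → μ`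
with `μ^n ≤ σ_n`. For fixed `n` and `v`, the `n`-step prefixes of the `(n + m)`-step SAWs from `v`
form a decreasing family of finite sets, which stabilises; by Kőnig's lemma the stable set consists
of forward extendable walks. Hence `σ_{n+m} ≤ σ^F_n σ_m` for all large `m` (uniformly in `v`, by
quasi-transitivity), and iterating this against `σ_k ≥ μ^k` gives `σ^F_n ≥ μ^n`. Together with
`σ^F_n ≤ σ_n` this squeezes `(σ^F_n)^{1/n}` to `μ`. If some `σ_N` vanishes, both sequences are
eventually zero. -/

open Topology

namespace Real

variable {a b : ℕ → ℝ}

theorem exists_tendsto_rpow_one_div_of_submul (ha : ∀ n, 1 ≤ a n)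
    (hmul : ∀ n m, a (n + m) ≤ a n * a m) :
    ∃ μ, 0 < μ ∧ (∀ n ≠ 0, μ ^ n ≤ a n) ∧
      Tendsto (fun n : ℕ => a n ^ (1 / (n : ℝ))) atTop (𝓝 μ) := by
  have hpos n : 0 < a n := one_pos.trans_le (ha n)
  have hsub : Subadditive fun n => log (a n) := fun m n =>
    (log_le_log (hpos _) (hmul m n)).trans_eq (log_mul (hpos m).ne' (hpos n).ne')
  have hbdd : BddBelow (Set.range fun n : ℕ => log (a n) / n) :=
    ⟨0, by rintro _ ⟨n, rfl⟩; exact div_nonneg (log_nonneg (ha n)) n.cast_nonneg⟩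
  refine ⟨exp hsub.lim, exp_pos _, fun n hn => ?_, ?_⟩
  · have h := hsub.lim_le_div hbdd hn
    rw [le_div_iff₀ (by positivity)] at h
    calc exp hsub.lim ^ n = exp (hsub.lim * n) := by rw [mul_comm, exp_nat_mul]
      _ ≤ exp (log (a n)) := exp_le_exp.mpr h
      _ = a n := exp_log (hpos n)
  · refine ((continuous_exp.tendsto _).comp (hsub.tendsto_lim hbdd)).congr fun n => ?_
    simp only [Function.comp_apply, rpow_def_of_pos (hpos n), mul_one_div]

/-- Iterating the bound from a fixed `M` gives `μ ^ M * (μ ^ n) ^ j ≤ c ^ j * a M` for all `j`,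
which is impossible if `c < μ ^ n`. -/
theorem pow_le_of_eventually_le_mul {μ c : ℝ} {n : ℕ} (hμ : 0 < μ) (hc : 0 ≤ c)
    (hlow : ∀ k ≠ 0, μ ^ k ≤ a k) (hstab : ∀ᶠ m in atTop, a (n + m) ≤ c * a m) :
    μ ^ n ≤ c := by
  obtain ⟨M, hM⟩ := (hstab.and (eventually_ge_atTop 1)).exists_forall_of_atTop
  have hiter j : a (M + j * n) ≤ c ^ j * a M := by
    induction j with
    | zero => simp
    | succ j ih =>
      calc a (M + (j + 1) * n) = a (n + (M + j * n)) := by ring_nf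
        _ ≤ c * a (M + j * n) := (hM _ (by omega)).1
        _ ≤ c * (c ^ j * a M) := by gcongr
        _ = c ^ (j + 1) * a M := by ring
  by_contra! hlt
  have hμn : 0 < μ ^ n := pow_pos hμ n
  have hbound j : μ ^ M ≤ a M * (c / μ ^ n) ^ j := by
    have h := (hlow _ (by have := (hM M le_rfl).2; omega)).trans (hiter j)
    rw [pow_add, pow_mul'] at h
    rw [div_pow, mul_div_assoc', le_div_iff₀ (pow_pos hμn j)]
    linarith
  have hlim : Tendsto (fun j : ℕ => a M * (c / μ ^ n) ^ j) atTop (𝓝 0) := by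
    simpa using (tendsto_pow_atTop_nhds_zero_of_lt_one (div_nonneg hc hμn.le)
      ((div_lt_one hμn).mpr hlt)).const_mul (a M)
  exact (pow_pos hμ M).not_ge (ge_of_tendsto' hlim hbound)

theorem exists_tendsto_rpow_one_div_of_eventually_le_mul (ha : ∀ n, 1 ≤ a n)
    (hmul : ∀ n m, a (n + m) ≤ a n * a m) (hb : ∀ n, 0 ≤ b n) (hba : ∀ n, b n ≤ a n)
    (hstab : ∀ n, ∀ᶠ m in atTop, a (n + m) ≤ b n * a m) :
    ∃ μ, Tendsto (fun n : ℕ => a n ^ (1 / (n : ℝ))) atTop (𝓝 μ) ∧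
      Tendsto (fun n : ℕ => b n ^ (1 / (n : ℝ))) atTop (𝓝 μ) := by
  obtain ⟨μ, hμ, hlow, hlim⟩ := exists_tendsto_rpow_one_div_of_submul ha hmul
  refine ⟨μ, hlim, tendsto_of_tendsto_of_tendsto_of_le_of_le' tendsto_const_nhds hlim ?_ ?_⟩
  · filter_upwards [eventually_ne_atTop 0] with n hn
    rw [one_div, le_rpow_inv_iff_of_pos hμ.le (hb n) (by positivity), rpow_natCast]
    exact pow_le_of_eventually_le_mul hμ (hb n) hlow (hstab n)
  · exact Eventually.of_forall fun n => rpow_le_rpow (hb n) (hba n) (by positivity)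

end Real

namespace ENNReal

variable {s t : ℕ → ℝ≥0∞}

theorem exists_tendsto_rpow_one_div_of_eventually_le_mul (hs : ∀ n, s n ≠ ⊤)
    (hs_one : ∀ n, s n ≠ 0 → 1 ≤ s n) (hmul : ∀ n m, s (n + m) ≤ s n * s m)
    (hts : ∀ n, t n ≤ s n) (hstab : ∀ n, ∀ᶠ m in atTop, s (n + m) ≤ t n * s m) :
    ∃ μ, Tendsto (fun n : ℕ => s n ^ (1 / (n : ℝ))) atTop (𝓝 μ) ∧
      Tendsto (fun n : ℕ => t n ^ (1 / (n : ℝ))) atTop (𝓝 μ) := by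
  by_cases hzero : ∃ N, s N = 0
  · obtain ⟨N, hN⟩ := hzero
    have hs_zero : ∀ n ≥ N, s n = 0 := fun n hn => by
      simpa [hN, Nat.add_sub_cancel' hn] using hmul N (n - N)
    have hroot_zero (u : ℕ → ℝ≥0∞) (hu : ∀ n, u n ≤ s n) :
        Tendsto (fun n : ℕ => u n ^ (1 / (n : ℝ))) atTop (𝓝 0) := by
      refine tendsto_const_nhds.congr' ?_
      filter_upwards [eventually_ge_atTop (N + 1)] with n hn
      have hn_pos : (0 : ℝ) < n := by exact_mod_cast (show 0 < n by omega)
      rw [nonpos_iff_eq_zero.mp ((hu n).trans_eq (hs_zero n (by omega))),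
        zero_rpow_of_pos (by positivity)]
    exact ⟨0, hroot_zero s fun _ => le_rfl, hroot_zero t hts⟩
  simp only [not_exists] at hzero
  have ht n : t n ≠ ⊤ := ne_top_of_le_ne_top (hs n) (hts n)
  have hroot (u : ℕ → ℝ≥0∞) (hu : ∀ n, u n ≠ ⊤) :
      (fun n : ℕ => u n ^ (1 / (n : ℝ))) =
        fun n => ENNReal.ofReal ((u n).toReal ^ (1 / (n : ℝ))) := funext fun n => by
    rw [← ofReal_rpow_of_nonneg toReal_nonneg (by positivity), ofReal_toReal (hu n)]
  obtain ⟨μ, hμs, hμt⟩ := Real.exists_tendsto_rpow_one_div_of_eventually_le_mul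
    (a := fun n => (s n).toReal) (b := fun n => (t n).toReal)
    (fun n => by simpa using toReal_mono (hs n) (hs_one n (hzero n)))
    (fun n m => by simpa using toReal_mono (mul_ne_top (hs n) (hs m)) (hmul n m))
    (fun n => toReal_nonneg) (fun n => toReal_mono (hs n) (hts n))
    (fun n => (hstab n).mono fun m hm => by
      simpa using toReal_mono (mul_ne_top (ht n) (hs m)) hm)
  exact ⟨ENNReal.ofReal μ, hroot s hs ▸ tendsto_ofReal hμs, hroot t ht ▸ tendsto_ofReal hμt⟩

end ENNReal

namespace Dgraph

variable {G : Dgraph}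

namespace SAW

variable {v : G.V}

def take_s11 {N : ℕ} (W : G.SAW N v) (n : ℕ) (h : n ≤ N) : G.SAW n v where
  vs i := W.vs (Fin.castLE (by omega) i)
  es i := W.es (Fin.castLE h i)
  hsrc i := W.hsrc _
  htgt i := W.htgt _
  hstart := W.hstart
  hinj _ _ hij := Fin.castLE_injective _ (W.hinj hij)

def drop {n m : ℕ} (W : G.SAW (n + m) v) : G.SAW m (W.vs ⟨n, by omega⟩) where
  vs i := W.vs ⟨n + i, by omega⟩
  es i := W.es ⟨n + i, by omega⟩
  hsrc i := W.hsrc _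
  htgt i := W.htgt ⟨n + i, by omega⟩
  hstart := rfl
  hinj i j hij := Fin.ext (by simpa using congrArg Fin.val (W.hinj hij))

def HasExtension {n : ℕ} (w : G.SAW n v) (m : ℕ) : Prop :=
  ∃ W : G.SAW (n + m) v, W.take_s11 n (Nat.le_add_right n m) = w

theorem HasExtension.mono {n m m' : ℕ} {w : G.SAW n v} (hw : w.HasExtension m') (h : m ≤ m') :
    w.HasExtension m := by
  obtain ⟨W, rfl⟩ := hw
  exact ⟨W.take_s11 (n + m) (by omega), rfl⟩

def split {n m : ℕ} (W : G.SAW (n + m) v) :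
    Σ w : {w : G.SAW n v // w.HasExtension m}, G.SAW m (w.1.vs (Fin.last n)) :=
  ⟨⟨W.take_s11 n (Nat.le_add_right n m), W, rfl⟩, W.drop⟩

theorem split_injective {n m : ℕ} : Function.Injective (split : G.SAW (n + m) v → _) := by
  intro W W' h
  have htake : W.take_s11 n _ = W'.take_s11 n _ := congrArg (fun p => p.1.1) h
  have hdrop_vs (i : Fin (m + 1)) : W.drop.vs i = W'.drop.vs i :=
    congrArg (fun p => p.2.vs i) h
  have hdrop_es (i : Fin m) : W.drop.es i = W'.drop.es i := congrArg (fun p => p.2.es i) h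
  ext i
  · by_cases hi : (i : ℕ) ≤ n
    · exact congrArg (fun w => w.vs ⟨i, by omega⟩) htake
    · simpa [drop, show n + (i - n) = (i : ℕ) by omega] using hdrop_vs ⟨i - n, by omega⟩
  · by_cases hi : (i : ℕ) < n
    · exact congrArg (fun w => w.es ⟨i, hi⟩) htake
    · simpa [drop, show n + (i - n) = (i : ℕ) by omega] using hdrop_es ⟨i - n, by omega⟩

end SAW

theorem LocallyFinite.finite_saw_one (hlf : G.LocallyFinite) (u : G.V) : Finite (G.SAW 1 u) := by
  have := (hlf u).1.to_subtype
  refine Finite.of_injective (β := {e : G.E | G.src e = u})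
    (fun W => ⟨W.es 0, (W.hsrc 0).trans W.hstart⟩) fun W W' h => ?_
  have hes : W.es 0 = W'.es 0 := congrArg Subtype.val h
  ext i
  · match i with
    | 0 => exact W.hstart.trans W'.hstart.symm
    | 1 => simpa [W.htgt, W'.htgt] using congrArg G.tgt hes
  · rwa [Subsingleton.elim i 0]

theorem LocallyFinite.finite_saw (hlf : G.LocallyFinite) (n : ℕ) (v : G.V) :
    Finite (G.SAW n v) := by
  induction n with
  | zero =>
    refine @Finite.of_subsingleton _ ⟨fun W W' => ?_⟩
    ext i
    · rw [Fin.fin_one_eq_zero i, W.hstart, W'.hstart]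
    · exact i.elim0
  | succ n ih =>
    have := hlf.finite_saw_one
    exact Finite.of_injective _ (SAW.split_injective (m := 1))

/-- Kőnig's lemma, applied to the walks of length `n + k` extending `w`, which form an inverse
system of finite nonempty sets under `SAW.take`. -/
theorem isFwdExt_of_forall_hasExtension (hlf : G.LocallyFinite) {n : ℕ} {v : G.V}
    {w : G.SAW n v} (hw : ∀ k, w.HasExtension k) : G.IsFwdExt w := by
  have := hlf.finite_saw
  let α k := {W : G.SAW (n + k) v // W.take_s11 n (Nat.le_add_right n k) = w}
  have : ∀ k, Nonempty (α k) := fun k => (hw k).elim fun W hW => ⟨⟨W, hW⟩⟩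
  obtain ⟨f, hf⟩ := exists_seq_forall_proj_of_forall_finite (α := α)
    (fun {i j} hij W => ⟨W.1.take_s11 (n + i) (by omega), W.2⟩)
    (fun _ _ => rfl) (fun _ _ _ _ _ _ => rfl) (fun _ _ => Set.toFinite _)
  have hvs {i j : ℕ} (hij : i ≤ j) (p : ℕ) (hp : p < n + i + 1) :
      (f j).1.vs ⟨p, by omega⟩ = (f i).1.vs ⟨p, hp⟩ :=
    congrArg (fun W => W.1.vs ⟨p, hp⟩) (hf hij)
  refine ⟨fun k => (f k).1.vs ⟨k, by omega⟩, fun k => (f (k + 1)).1.es ⟨k, by omega⟩,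
    fun a b hab => ?_, fun k => ⟨?_, (f (k + 1)).1.htgt _⟩, fun i => ?_, fun i => ?_⟩
  · have := (f (max a b)).1.hinj <| (hvs (le_max_left a b) a (by omega)).trans <|
      hab.trans (hvs (le_max_right a b) b (by omega)).symm
    simpa using this
  · exact ((f (k + 1)).1.hsrc _).trans (hvs (Nat.le_succ k) k (by omega))
  · exact (hvs (Nat.zero_le i) i (by omega)).trans (congrArg (fun W => W.vs i) (f 0).2)
  · exact (congrArg (fun W => W.1.es ⟨i, by omega⟩) (hf (Nat.zero_le (i + 1)))).trans
      (congrArg (fun W => W.es i) (f 0).2)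

theorem eventually_isFwdExt_of_hasExtension (hlf : G.LocallyFinite) (n : ℕ) (v : G.V) :
    ∀ᶠ m in atTop, ∀ w : G.SAW n v, w.HasExtension m → G.IsFwdExt w := by
  have := hlf.finite_saw n v
  refine eventually_all.2 fun w => ?_
  by_cases hw : ∀ k, w.HasExtension k
  · exact Eventually.of_forall fun _ _ => isFwdExt_of_forall_hasExtension hlf hw
  · obtain ⟨k, hk⟩ := not_forall.mp hw
    filter_upwards [eventually_ge_atTop k] with m hm hwm
    exact absurd (hwm.mono hm) hk

theorem sigma_le_ssigma (n : ℕ) (v : G.V) : (G.sigma n v : ℝ≥0∞) ≤ G.ssigma n :=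
  le_iSup (fun u => (G.sigma n u : ℝ≥0∞)) v

theorem sigmaF_le_ssigmaF (n : ℕ) (v : G.V) : (G.sigmaF n v : ℝ≥0∞) ≤ G.ssigmaF n :=
  le_iSup (fun u => (G.sigmaF n u : ℝ≥0∞)) v

theorem sigma_add_le_card_mul (hlf : G.LocallyFinite) (n m : ℕ) (v : G.V) :
    (G.sigma (n + m) v : ℝ≥0∞) ≤
      Nat.card {w : G.SAW n v // w.HasExtension m} * G.ssigma m := by
  have := hlf.finite_saw
  have := Fintype.ofFinite {w : G.SAW n v // w.HasExtension m}
  calc (G.sigma (n + m) v : ℝ≥0∞)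
      ≤ Nat.card (Σ w : {w : G.SAW n v // w.HasExtension m}, G.SAW m (w.1.vs (Fin.last n))) := by
        exact_mod_cast Nat.card_le_card_of_injective _ SAW.split_injective
    _ = ∑ w : {w : G.SAW n v // w.HasExtension m},
          (G.sigma m (w.1.vs (Fin.last n)) : ℝ≥0∞) := by
        rw [Nat.card_sigma, Nat.cast_sum]; rfl
    _ ≤ ∑ _w : {w : G.SAW n v // w.HasExtension m}, G.ssigma m :=
        Finset.sum_le_sum fun w _ => sigma_le_ssigma m _
    _ = _ := by rw [Finset.sum_const, Finset.card_univ, nsmul_eq_mul, Nat.card_eq_fintype_card]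

theorem ssigma_add_le_mul (hlf : G.LocallyFinite) (n m : ℕ) :
    G.ssigma (n + m) ≤ G.ssigma n * G.ssigma m := by
  have := hlf.finite_saw n
  refine iSup_le fun v => (sigma_add_le_card_mul hlf n m v).trans (mul_le_mul_left ?_ _)
  exact (Nat.cast_le.2 (Finite.card_subtype_le _)).trans (sigma_le_ssigma n v)

theorem eventually_sigma_add_le_mul (hlf : G.LocallyFinite) (n : ℕ) (v : G.V) :
    ∀ᶠ m in atTop, (G.sigma (n + m) v : ℝ≥0∞) ≤ G.sigmaF n v * G.ssigma m := by
  have := hlf.finite_saw n v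
  filter_upwards [eventually_isFwdExt_of_hasExtension hlf n v] with m hm
  refine (sigma_add_le_card_mul hlf n m v).trans (mul_le_mul_left ?_ _)
  exact_mod_cast Nat.card_le_card_of_injective _ (Subtype.impEmbedding _ _ hm).injective

theorem ssigmaF_le_ssigma (hlf : G.LocallyFinite) (n : ℕ) : G.ssigmaF n ≤ G.ssigma n := by
  have := hlf.finite_saw n
  exact iSup_mono fun v => Nat.cast_le.2 (Finite.card_subtype_le _)

theorem one_le_ssigma_of_ne_zero {n : ℕ} (h : G.ssigma n ≠ 0) : 1 ≤ G.ssigma n := by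
  obtain ⟨v, hv⟩ : ∃ v, G.sigma n v ≠ 0 := by simpa [ssigma] using h
  exact (Nat.one_le_cast.2 (Nat.one_le_iff_ne_zero.2 hv)).trans (sigma_le_ssigma n v)

def Aut.mapSAW (φ : G.Aut) (n : ℕ) (v : G.V) : G.SAW n v ≃ G.SAW n (φ.vmap v) where
  toFun W :=
    { vs := φ.vmap ∘ W.vs
      es := φ.emap ∘ W.es
      hsrc i := by simp [φ.src_eq, W.hsrc]
      htgt i := by simp [φ.tgt_eq, W.htgt]
      hstart := by simp [W.hstart]
      hinj := φ.vmap.injective.comp W.hinj }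
  invFun W :=
    { vs := φ.vmap.symm ∘ W.vs
      es := φ.emap.symm ∘ W.es
      hsrc i := φ.vmap.injective <| by simp [← φ.src_eq, W.hsrc]
      htgt i := φ.vmap.injective <| by simp [← φ.tgt_eq, W.htgt]
      hstart := by simp [W.hstart]
      hinj := φ.vmap.symm.injective.comp W.hinj }
  left_inv W := by ext <;> simp
  right_inv W := by ext <;> simp

theorem sigma_eq_of_sameOrbit {s v : G.V} (h : G.SameOrbit s v) (n : ℕ) :
    G.sigma n v = G.sigma n s := by
  obtain ⟨φ, rfl⟩ := h
  exact (Nat.card_congr (φ.mapSAW n s)).symm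

theorem QuasiTransitive.ssigma_lt_top (hqt : G.QuasiTransitive) (n : ℕ) : G.ssigma n < ⊤ := by
  obtain ⟨S, hS⟩ := hqt
  refine (iSup_le fun v => ?_).trans_lt (natCast_lt_top (S.sup fun s => G.sigma n s))
  obtain ⟨s, hsS, hs⟩ := hS v
  rw [sigma_eq_of_sameOrbit hs]
  exact Nat.cast_le.2 (Finset.le_sup (f := fun s => G.sigma n s) hsS)

theorem QuasiTransitive.eventually_ssigma_add_le_mul (hqt : G.QuasiTransitive)
    (hlf : G.LocallyFinite) (n : ℕ) :
    ∀ᶠ m in atTop, G.ssigma (n + m) ≤ G.ssigmaF n * G.ssigma m := by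
  obtain ⟨S, hS⟩ := hqt
  filter_upwards [S.eventually_all.2 fun s _ => eventually_sigma_add_le_mul hlf n s] with m hm
  refine iSup_le fun v => ?_
  obtain ⟨s, hsS, hs⟩ := hS v
  rw [sigma_eq_of_sameOrbit hs]
  exact (hm s hsS).trans (mul_le_mul_left (sigmaF_le_ssigmaF n s) _)

end Dgraph

theorem muF_eq_mu_general (G : Dgraph) (hlf : G.LocallyFinite) (hqt : G.QuasiTransitive) :
    ∃ μ μF : ℝ≥0∞,
      Tendsto (fun n : ℕ => (G.ssigma n) ^ (1 / (n : ℝ))) atTop (nhds μ) ∧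
      Tendsto (fun n : ℕ => (G.ssigmaF n) ^ (1 / (n : ℝ))) atTop (nhds μF) ∧
      μF = μ := by
  obtain ⟨μ, hμ, hμF⟩ := ENNReal.exists_tendsto_rpow_one_div_of_eventually_le_mul
    (fun n => (hqt.ssigma_lt_top n).ne) (fun _ => Dgraph.one_le_ssigma_of_ne_zero)
    (Dgraph.ssigma_add_le_mul hlf) (Dgraph.ssigmaF_le_ssigma hlf)
    (hqt.eventually_ssigma_add_le_mul hlf)
  exact ⟨μ, μ, hμ, hμF, rfl⟩

/-- the limits `μ^F` and `μ` exist and `μ^F = μ`. -/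
theorem muF_eq_mu (G : Dgraph) (hinf : Infinite G.V) (hlf : G.LocallyFinite)
    (hsc : G.StronglyConnected) (hqt : G.QuasiTransitive) :
    ∃ μ μF : ℝ≥0∞,
      Tendsto (fun n : ℕ => (G.ssigma n) ^ (1 / (n : ℝ))) atTop (nhds μ) ∧
      Tendsto (fun n : ℕ => (G.ssigmaF n) ^ (1 / (n : ℝ))) atTop (nhds μF) ∧
      μF = μ :=
  muF_eq_mu_general G hlf hqt
end

section
/- Let G be an infinite, locally finite, strongly connected, quasi-transitive, unimodular directed graph and let Ḡ be the graph obtained by reversing all edges. Then there exists a constant C ≥ 1 such that C^{-1} ≤ σ^F_n(G) / σ^B_n(Ḡ) ≤ C for all n ≥ 0; if moreover G is vertex-transitive one may take C = 1. -/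
open Filter ENNReal

open Filter ENNReal

attribute [local instance] Classical.propDecidable


open Filter ENNReal

/-!
Let `X` be the set of forward-extendable `n`-step self-avoiding walks of `G`, with the action
of `Γ = Aut G` and the equivariant start and end maps `s, t : X → V`. Then `σ^F_n(v, G) = |s⁻¹ v|`
and, reversing walks, `σ^B_n(v, Ḡ) = |t⁻¹ v|`.

On one `Γ`-orbit `Γ • w`, with `s w = a` and `t w = x`, the fibres over `a` and `x` are the orbits
`Γ_a • w` and `Γ_x • w`. Orbit–stabiliser and the multiplicativity of relative indices in
`Γ_w ≤ Γ_a ⊓ Γ_x ≤ Γ_a, Γ_x` give `|Γ_a • x| * |Γ_x • w| = |Γ_x • a| * |Γ_a • w|`, the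
mass-transport principle on that orbit. Unimodularity lets `x` be replaced by the representative
`b` of its class, and summing over orbits gives `|s⁻¹ a| ≤ max |Γ_a • b| * ∑_b |t⁻¹ b|` (`a, b`
ranging over a finite set of class representatives), and the same with `s` and `t` exchanged.
For a transitive action there is a single class `{a}` and `|Γ_a • a| = 1`.
-/

theorem Set.ncard_le_mul_ncard_of_fiberwise {X Y : Type*} {P Q : Set X} (hP : P.Finite)
    (hQ : Q.Finite) (π : X → Y) (C : ℕ)
    (h : ∀ y, {x ∈ P | π x = y}.ncard ≤ C * {x ∈ Q | π x = y}.ncard) :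
    P.ncard ≤ C * Q.ncard := by
  classical
  lift P to Finset X using hP
  lift Q to Finset X using hQ
  have hfib : ∀ (R : Finset X) y, {x ∈ (R : Set X) | π x = y}.ncard = (R.filter (π · = y)).card :=
    fun R y => by rw [← Set.ncard_coe_finset, Finset.coe_filter]; rfl
  simp only [hfib, Set.ncard_coe_finset] at h ⊢
  calc P.card = ∑ y ∈ P.image π, (P.filter (π · = y)).card :=
        Finset.card_eq_sum_card_fiberwise fun x hx => Finset.mem_image_of_mem π hx
    _ ≤ ∑ y ∈ P.image π, C * (Q.filter (π · = y)).card := Finset.sum_le_sum fun y _ => h y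
    _ = C * (Q.filter (π · ∈ P.image π)).card := by
        rw [← Finset.mul_sum]
        congr 1
        convert Finset.sum_card_fiberwise_eq_card_filter Q (P.image π) π
    _ ≤ C * Q.card := Nat.mul_le_mul_left C (Finset.card_filter_le _ _)

theorem Fin.forall_apply_sub_one_sub_iff {α : Type*} {k : ℕ} (f : ℕ → α) (g : Fin k → α) :
    (∀ i : Fin k, f (k - 1 - i) = g i) ↔ ∀ i : Fin k, f i = g i.rev := by
  have hk : ∀ i : Fin k, k - 1 - (i : ℕ) = (i.rev : ℕ) := fun i => by rw [Fin.val_rev]; omega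
  simp only [hk]
  exact Fin.rev_surjective.forall.trans (by simp only [Fin.rev_rev])

namespace Subgroup

variable {Γ : Type*} [Group Γ]

theorem relIndex_mul_relIndex_comm {K A B : Subgroup Γ} (hA : K ≤ A) (hB : K ≤ B) :
    B.relIndex A * K.relIndex B = A.relIndex B * K.relIndex A := by
  have hK : K ≤ A ⊓ B := le_inf hA hB
  rw [← relIndex_mul_relIndex K (A ⊓ B) A hK inf_le_left,
    ← relIndex_mul_relIndex K (A ⊓ B) B hK inf_le_right, inf_relIndex_left, inf_relIndex_right]
  ring

theorem relIndex_cocycle {K A B C : Subgroup Γ} (hA : K ≤ A) (hB : K ≤ B) (hC : K ≤ C)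
    (hKA : K.relIndex A ≠ 0) (hKB : K.relIndex B ≠ 0) (hKC : K.relIndex C ≠ 0) :
    B.relIndex A * C.relIndex B * A.relIndex C = A.relIndex B * B.relIndex C * C.relIndex A := by
  have hAB := relIndex_mul_relIndex_comm hA hB
  have hBC := relIndex_mul_relIndex_comm hB hC
  have hCA := relIndex_mul_relIndex_comm hC hA
  have hK : K.relIndex A * K.relIndex B * K.relIndex C ≠ 0 := by positivity
  apply Nat.eq_of_mul_eq_mul_right (Nat.pos_of_ne_zero hK)
  calc B.relIndex A * C.relIndex B * A.relIndex C * (K.relIndex A * K.relIndex B * K.relIndex C)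
      = (B.relIndex A * K.relIndex B) * (C.relIndex B * K.relIndex C) *
          (A.relIndex C * K.relIndex A) := by ring
    _ = (A.relIndex B * K.relIndex A) * (B.relIndex C * K.relIndex B) *
          (C.relIndex A * K.relIndex C) := by rw [hAB, hBC, hCA]
    _ = _ := by ring

end Subgroup

namespace MulAction

variable {Γ V X : Type*} [Group Γ] [MulAction Γ V] [MulAction Γ X]

variable (Γ V) in
def FiniteStabilizerOrbits : Prop := ∀ u v : V, (orbit (stabilizer Γ u) v).Finite

variable (Γ V) in
def IsUnimodular : Prop := ∀ u v : V, v ∈ orbit Γ u →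
  (orbit (stabilizer Γ u) v).ncard = (orbit (stabilizer Γ v) u).ncard

theorem ncard_orbit_subgroup_eq_relIndex (H : Subgroup Γ) (x : X) :
    (orbit H x).ncard = (stabilizer Γ x).relIndex H := by
  rw [Subgroup.relIndex, ← index_stabilizer]
  rfl

theorem FiniteStabilizerOrbits.relIndex_ne_zero (hfin : FiniteStabilizerOrbits Γ V) (u v : V) :
    (stabilizer Γ v).relIndex (stabilizer Γ u) ≠ 0 := by
  rw [← ncard_orbit_subgroup_eq_relIndex]
  exact ((Set.ncard_pos (hfin u v)).mpr ⟨v, mem_orbit_self v⟩).ne'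

theorem stabilizer_le_stabilizer_map (f : X →[Γ] V) (x : X) :
    stabilizer Γ x ≤ stabilizer Γ (f x) := fun g hg => by
  rw [mem_stabilizer_iff, ← map_smul, mem_stabilizer_iff.mp hg]

theorem sep_orbit_eq_orbit_stabilizer (f : X →[Γ] V) (w : X) :
    {p ∈ orbit Γ w | f p = f w} = orbit (stabilizer Γ (f w)) w := by
  ext p
  constructor
  · rintro ⟨⟨g, rfl⟩, hg⟩
    exact ⟨⟨g, by rwa [mem_stabilizer_iff, ← map_smul]⟩, rfl⟩
  · rintro ⟨⟨g, hg⟩, rfl⟩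
    exact ⟨⟨g, rfl⟩, show f (g • w) = f w by rw [map_smul, mem_stabilizer_iff.mp hg]⟩

theorem ncard_sep_map_smul {P : Set X} (hP : ∀ (g : Γ), ∀ x ∈ P, g • x ∈ P) (f : X →[Γ] V)
    (g : Γ) (y : V) : {p ∈ P | f p = g • y}.ncard = {p ∈ P | f p = y}.ncard := by
  rw [← Set.ncard_smul_set g {p ∈ P | f p = y}]
  congr 1
  ext p
  refine ⟨fun ⟨hp, hfp⟩ => ⟨g⁻¹ • p, ⟨hP _ _ hp, ?_⟩, smul_inv_smul g p⟩, ?_⟩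
  · rw [map_smul, hfp, inv_smul_smul]
  · rintro ⟨q, ⟨hq, rfl⟩, rfl⟩
    exact ⟨hP g q hq, map_smul f g q⟩

theorem ncard_fiber_smul (f : X →[Γ] V) (g : Γ) (y : V) :
    {p | f p = g • y}.ncard = {p | f p = y}.ncard := by
  simpa only [Set.sep_univ] using ncard_sep_map_smul (P := Set.univ) (fun _ _ _ => trivial) f g y

theorem relIndex_mul_ncard_sep_orbit_self (s t : X →[Γ] V) (w : X) :
    (stabilizer Γ (t w)).relIndex (stabilizer Γ (s w)) * {p ∈ orbit Γ w | t p = t w}.ncard =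
      (stabilizer Γ (s w)).relIndex (stabilizer Γ (t w)) *
        {p ∈ orbit Γ w | s p = s w}.ncard := by
  rw [sep_orbit_eq_orbit_stabilizer, sep_orbit_eq_orbit_stabilizer,
    ncard_orbit_subgroup_eq_relIndex, ncard_orbit_subgroup_eq_relIndex]
  exact Subgroup.relIndex_mul_relIndex_comm (stabilizer_le_stabilizer_map s w)
    (stabilizer_le_stabilizer_map t w)

/-- The modular ratio `|Γ_a • x| / |Γ_x • a|` is a cocycle, trivial along orbits by
unimodularity, so it only depends on the orbit of `x`. -/
theorem IsUnimodular.relIndex_mul_relIndex (huni : IsUnimodular Γ V)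
    (hfin : FiniteStabilizerOrbits Γ V) (a : V) {b x : V} (hx : x ∈ orbit Γ b) :
    (stabilizer Γ x).relIndex (stabilizer Γ a) * (stabilizer Γ a).relIndex (stabilizer Γ b) =
      (stabilizer Γ a).relIndex (stabilizer Γ x) * (stabilizer Γ b).relIndex (stabilizer Γ a) := by
  set K := stabilizer Γ a ⊓ stabilizer Γ b ⊓ stabilizer Γ x
  have hK : ∀ u, K.relIndex (stabilizer Γ u) ≠ 0 := fun u =>
    Subgroup.relIndex_inf_ne_zero (Subgroup.relIndex_inf_ne_zero (hfin.relIndex_ne_zero u a)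
      (hfin.relIndex_ne_zero u b)) (hfin.relIndex_ne_zero u x)
  have hcocycle := Subgroup.relIndex_cocycle (K := K) (inf_le_left.trans inf_le_left)
    (inf_le_left.trans inf_le_right) inf_le_right (hK a) (hK b) (hK x)
  have hbx := huni b x hx
  rw [ncard_orbit_subgroup_eq_relIndex, ncard_orbit_subgroup_eq_relIndex] at hbx
  rw [hbx] at hcocycle
  apply Nat.eq_of_mul_eq_mul_left (Nat.pos_of_ne_zero (hfin.relIndex_ne_zero x b))
  linear_combination hcocycle.symm

theorem IsUnimodular.relIndex_mul_ncard_sep_orbit (huni : IsUnimodular Γ V)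
    (hfin : FiniteStabilizerOrbits Γ V) (s t : X →[Γ] V) (w : X) {b : V}
    (hb : t w ∈ orbit Γ b) :
    (stabilizer Γ (s w)).relIndex (stabilizer Γ b) * {p ∈ orbit Γ w | s p = s w}.ncard =
      (stabilizer Γ b).relIndex (stabilizer Γ (s w)) * {p ∈ orbit Γ w | t p = b}.ncard := by
  obtain ⟨g, hg⟩ := hb
  have hfiber : {p ∈ orbit Γ w | t p = b}.ncard = {p ∈ orbit Γ w | t p = t w}.ncard := by
    rw [← hg, ncard_sep_map_smul (fun g _ => mem_orbit_of_mem_orbit g) t g b]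
  have horbit := relIndex_mul_ncard_sep_orbit_self s t w
  have hmodular := huni.relIndex_mul_relIndex hfin (s w) ⟨g, hg⟩
  rw [hfiber]
  apply Nat.eq_of_mul_eq_mul_left (Nat.pos_of_ne_zero (hfin.relIndex_ne_zero (t w) (s w)))
  linear_combination {p ∈ orbit Γ w | t p = t w}.ncard * hmodular -
    (stabilizer Γ (s w)).relIndex (stabilizer Γ b) * horbit

theorem IsUnimodular.ncard_fiber_le (huni : IsUnimodular Γ V)
    (hfin : FiniteStabilizerOrbits Γ V) (s t : X →[Γ] V) {S : Finset V}
    (hS : ∀ v, ∃ b ∈ S, v ∈ orbit Γ b) {a : V} (ha : a ∈ S) (hsa : {x | s x = a}.Finite)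
    (ht : ∀ b ∈ S, {x | t x = b}.Finite) :
    {x | s x = a}.ncard ≤ (S ×ˢ S).sup (fun q => (stabilizer Γ q.2).relIndex (stabilizer Γ q.1))
      * ∑ b ∈ S, {x | t x = b}.ncard := by
  set C := (S ×ˢ S).sup (fun q => (stabilizer Γ q.2).relIndex (stabilizer Γ q.1))
  set Q := ⋃ b ∈ S, {x | t x = b}
  have hQ : Q.Finite := S.finite_toSet.biUnion ht
  calc {x | s x = a}.ncard ≤ C * Q.ncard :=
        Set.ncard_le_mul_ncard_of_fiberwise hsa hQ (orbit Γ) C fun O => ?_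
    _ ≤ C * ∑ b ∈ S, {x | t x = b}.ncard := Nat.mul_le_mul_left C (S.set_ncard_biUnion_le _)
  rcases Set.eq_empty_or_nonempty {x ∈ {x | s x = a} | orbit Γ x = O} with hO | ⟨w, hwa, rfl⟩
  · rw [hO, Set.ncard_empty]
    exact Nat.zero_le _
  obtain ⟨b, hbS, hb⟩ := hS (t w)
  obtain rfl : s w = a := hwa
  have hsep : {x ∈ {x | s x = s w} | orbit Γ x = orbit Γ w} = {p ∈ orbit Γ w | s p = s w} := by
    ext p
    exact and_comm.trans (and_congr_left' orbit_eq_iff)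
  have hsub : {p ∈ orbit Γ w | t p = b} ⊆ {x ∈ Q | orbit Γ x = orbit Γ w} :=
    fun p ⟨hp, hpb⟩ => ⟨Set.mem_biUnion hbS hpb, orbit_eq_iff.mpr hp⟩
  have hC := Finset.le_sup (f := fun q => (stabilizer Γ q.2).relIndex (stabilizer Γ q.1))
    (Finset.mem_product.mpr ⟨ha, hbS⟩ : (s w, b) ∈ S ×ˢ S)
  rw [hsep]
  calc {p ∈ orbit Γ w | s p = s w}.ncard
      ≤ (stabilizer Γ (s w)).relIndex (stabilizer Γ b) * {p ∈ orbit Γ w | s p = s w}.ncard :=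
        Nat.le_mul_of_pos_left _ (Nat.pos_of_ne_zero (hfin.relIndex_ne_zero b (s w)))
    _ = (stabilizer Γ b).relIndex (stabilizer Γ (s w)) * {p ∈ orbit Γ w | t p = b}.ncard :=
        huni.relIndex_mul_ncard_sep_orbit hfin s t w hb
    _ ≤ C * {x ∈ Q | orbit Γ x = orbit Γ w}.ncard :=
        Nat.mul_le_mul hC (Set.ncard_le_ncard hsub (hQ.subset (Set.sep_subset _ _)))

theorem IsUnimodular.iSup_ncard_fiber_le (huni : IsUnimodular Γ V)
    (hfin : FiniteStabilizerOrbits Γ V) (s t : X →[Γ] V) {S : Finset V}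
    (hS : ∀ v, ∃ b ∈ S, v ∈ orbit Γ b) (hs : ∀ v, {x | s x = v}.Finite)
    (ht : ∀ v, {x | t x = v}.Finite) :
    ⨆ v, ({x | s x = v}.ncard : ℝ≥0∞) ≤
      (((S ×ˢ S).sup (fun q => (stabilizer Γ q.2).relIndex (stabilizer Γ q.1)) * S.card : ℕ) :
        ℝ≥0∞) * ⨆ v, ({x | t x = v}.ncard : ℝ≥0∞) := by
  set C := (S ×ˢ S).sup (fun q => (stabilizer Γ q.2).relIndex (stabilizer Γ q.1))
  refine iSup_le fun v => ?_
  obtain ⟨a, ha, g, rfl⟩ := hS v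
  rw [ncard_fiber_smul]
  calc ({x | s x = a}.ncard : ℝ≥0∞)
      ≤ ((C * ∑ b ∈ S, {x | t x = b}.ncard : ℕ) : ℝ≥0∞) :=
        Nat.cast_le.mpr (huni.ncard_fiber_le hfin s t hS ha (hs a) fun b _ => ht b)
    _ ≤ C * ∑ _b ∈ S, ⨆ v, ({x | t x = v}.ncard : ℝ≥0∞) := by
        push_cast
        gcongr with b
        exact le_iSup (fun v => ({x | t x = v}.ncard : ℝ≥0∞)) b
    _ = ((C * S.card : ℕ) : ℝ≥0∞) * ⨆ v, ({x | t x = v}.ncard : ℝ≥0∞) := by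
        rw [Finset.sum_const, nsmul_eq_mul]
        push_cast
        ring

theorem IsUnimodular.ncard_fiber_eq [IsPretransitive Γ V] (huni : IsUnimodular Γ V)
    (hfin : FiniteStabilizerOrbits Γ V) (s t : X →[Γ] V) (hs : ∀ v, {x | s x = v}.Finite)
    (ht : ∀ v, {x | t x = v}.Finite) (a : V) :
    {x | s x = a}.ncard = {x | t x = a}.ncard := by
  have hS : ∀ v, ∃ b ∈ ({a} : Finset V), v ∈ orbit Γ b :=
    fun v => ⟨a, Finset.mem_singleton_self a, exists_smul_eq Γ a v⟩
  have h₁ := huni.ncard_fiber_le hfin s t hS (Finset.mem_singleton_self a) (hs a) fun b _ => ht b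
  have h₂ := huni.ncard_fiber_le hfin t s hS (Finset.mem_singleton_self a) (ht a) fun b _ => hs b
  simp only [Finset.singleton_product_singleton, Finset.sup_singleton, Subgroup.relIndex_self,
    Finset.sum_singleton, one_mul] at h₁ h₂
  exact le_antisymm h₁ h₂

end MulAction

namespace Dgraph

open MulAction

def reach (G : Dgraph) : ℕ → G.V → Set G.V
  | 0, u => {u}
  | n + 1, u => {w | ∃ v ∈ reach G n u, G.Adj v w}

variable {G : Dgraph} {n : ℕ}

theorem Aut.ext {φ ψ : G.Aut} (hv : φ.vmap = ψ.vmap) (he : φ.emap = ψ.emap) : φ = ψ := by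
  cases φ; cases ψ; cases hv; cases he; rfl

instance : Group G.Aut where
  mul φ ψ := ⟨ψ.vmap.trans φ.vmap, ψ.emap.trans φ.emap,
    fun e => by simp [φ.src_eq, ψ.src_eq], fun e => by simp [φ.tgt_eq, ψ.tgt_eq]⟩
  one := ⟨Equiv.refl _, Equiv.refl _, fun _ => rfl, fun _ => rfl⟩
  inv φ := ⟨φ.vmap.symm, φ.emap.symm,
    fun e => φ.vmap.injective (by simp [← φ.src_eq]),
    fun e => φ.vmap.injective (by simp [← φ.tgt_eq])⟩
  mul_assoc _ _ _ := rfl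
  one_mul _ := rfl
  mul_one _ := rfl
  inv_mul_cancel φ := Aut.ext φ.vmap.self_trans_symm φ.emap.self_trans_symm

instance : MulAction G.Aut G.V where
  smul φ v := φ.vmap v
  one_smul _ := rfl
  mul_smul _ _ _ := rfl

theorem Aut.adj (φ : G.Aut) {u v : G.V} (h : G.Adj u v) : G.Adj (φ • u) (φ • v) := by
  obtain ⟨e, hu, hv⟩ := h
  exact ⟨φ.emap e, by rw [φ.src_eq, hu]; rfl, by rw [φ.tgt_eq, hv]; rfl⟩

theorem reach_finite (hout : ∀ v : G.V, {e : G.E | G.src e = v}.Finite) (n : ℕ) (u : G.V) :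
    (G.reach n u).Finite := by
  induction n with
  | zero => exact Set.finite_singleton u
  | succ n ih =>
    refine (ih.biUnion fun v _ => (hout v).image G.tgt).subset ?_
    rintro w ⟨v, hv, e, he, rfl⟩
    exact Set.mem_biUnion hv ⟨e, he, rfl⟩

theorem exists_mem_reach {u v : G.V} (h : Relation.ReflTransGen G.Adj u v) :
    ∃ n, v ∈ G.reach n u := by
  induction h with
  | refl => exact ⟨0, Set.mem_singleton _⟩
  | tail _ hvw ih =>
    obtain ⟨n, hn⟩ := ih
    exact ⟨n + 1, _, hn, hvw⟩

theorem Aut.smul_mem_reach (φ : G.Aut) {u v : G.V} (h : v ∈ G.reach n u) :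
    φ • v ∈ G.reach n (φ • u) := by
  induction n generalizing v with
  | zero => exact congrArg (φ • ·) (Set.mem_singleton_iff.mp h)
  | succ n ih =>
    obtain ⟨w, hw, hwv⟩ := h
    exact ⟨φ • w, ih hw, φ.adj hwv⟩

theorem finiteStabilizerOrbits (hlf : G.LocallyFinite) (hsc : G.StronglyConnected) :
    FiniteStabilizerOrbits G.Aut G.V := fun u v => by
  obtain ⟨n, hn⟩ := exists_mem_reach (hsc u v)
  refine (reach_finite (fun x => (hlf x).1) n u).subset ?_
  rintro _ ⟨⟨φ, hφ⟩, rfl⟩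
  simpa [mem_stabilizer_iff.mp hφ] using φ.smul_mem_reach hn

theorem stabOrbit_eq_orbit (u v : G.V) : G.stabOrbit u v = orbit (stabilizer G.Aut u) v := by
  ext w
  exact ⟨fun ⟨φ, hu, hv⟩ => ⟨⟨φ, hu⟩, hv⟩, fun ⟨⟨φ, hu⟩, hv⟩ => ⟨φ, hu, hv⟩⟩

theorem Unimodular.isUnimodular (huni : G.Unimodular) : IsUnimodular G.Aut G.V :=
  fun u v ⟨φ, hφ⟩ => by
    simpa only [stabOrbit_eq_orbit, Nat.card_coe_set_eq] using huni u v ⟨φ, hφ⟩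

theorem SAW.mem_reach {v : G.V} (w : G.SAW n v) (j : Fin (n + 1)) : w.vs j ∈ G.reach j v :=
  Fin.induction (motive := fun j => w.vs j ∈ G.reach j v) w.hstart
    (fun i ih => ⟨_, ih, w.es i, w.hsrc i, w.htgt i⟩) j

theorem SAW.finite (hout : ∀ v : G.V, {e : G.E | G.src e = v}.Finite) (v : G.V) :
    Finite (G.SAW n v) := by
  have hR : ∀ j, (G.reach j v).Finite := fun j => reach_finite hout j v
  have hW : ({vs : Fin (n + 1) → G.V | ∀ j : Fin (n + 1), vs j ∈ G.reach j v} ×ˢ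
      {es : Fin n → G.E | ∀ i : Fin n, es i ∈ {e | G.src e ∈ G.reach i v}}).Finite :=
    (Set.Finite.pi' fun j : Fin (n + 1) => hR j).prod (Set.Finite.pi' fun i : Fin n =>
      ((hR i).biUnion fun u _ => hout u).subset fun e he => Set.mem_biUnion he rfl)
  refine Set.finite_univ_iff.mp
    ((hW.preimage (f := fun w : G.SAW n v => (w.vs, w.es)) ?_).subset ?_)
  · exact fun w _ w' _ h => SAW.ext (congrArg Prod.fst h) (congrArg Prod.snd h)
  · intro w _
    exact ⟨fun j => w.mem_reach j,
      fun i => show G.src (w.es i) ∈ _ from w.hsrc i ▸ w.mem_reach i.castSucc⟩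

/-- The condition of `IsFwdExt`, for bare vertex and edge sequences. -/
def ExtendsFwd (G : Dgraph) (vs : Fin (n + 1) → G.V) (es : Fin n → G.E) : Prop :=
  ∃ (vs' : ℕ → G.V) (es' : ℕ → G.E), Function.Injective vs' ∧
    (∀ i : ℕ, G.src (es' i) = vs' i ∧ G.tgt (es' i) = vs' (i + 1)) ∧
    (∀ i : Fin (n + 1), vs' i = vs i) ∧ (∀ i : Fin n, es' i = es i)

theorem ExtendsFwd.map (φ : G.Aut) {vs : Fin (n + 1) → G.V} {es : Fin n → G.E}
    (h : G.ExtendsFwd vs es) : G.ExtendsFwd (φ.vmap ∘ vs) (φ.emap ∘ es) := by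
  obtain ⟨vs', es', hinj, hwalk, hvs, hes⟩ := h
  exact ⟨φ.vmap ∘ vs', φ.emap ∘ es', φ.vmap.injective.comp hinj,
    fun i => ⟨by simp [φ.src_eq, (hwalk i).1], by simp [φ.tgt_eq, (hwalk i).2]⟩,
    fun i => by simp [hvs i], fun i => by simp [hes i]⟩

theorem isBwdExt_rev_iff {v : G.V} (w : G.rev.SAW n v) :
    G.rev.IsBwdExt w ↔ G.ExtendsFwd (fun i => w.vs i.rev) (fun i => w.es i.rev) := by
  refine exists_congr fun vs' => exists_congr fun es' => and_congr Iff.rfl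
    (and_congr (forall_congr' fun _ => and_comm) (and_congr ?_ ?_))
  · have h := Fin.forall_apply_sub_one_sub_iff (k := n + 1) vs' w.vs
    rw [Nat.add_sub_cancel] at h
    exact h
  · exact Fin.forall_apply_sub_one_sub_iff es' w.es

/-- Forward-extendable `n`-step SAWs with unspecified starting point: `σ^F_n(G)` counts them by
their first vertex and `σ^B_n(Ḡ)` by their last one. -/
@[ext]
structure FwdExtWalk (G : Dgraph) (n : ℕ) where
  vs : Fin (n + 1) → G.V
  es : Fin n → G.E
  hsrc : ∀ i : Fin n, G.src (es i) = vs i.castSucc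
  htgt : ∀ i : Fin n, G.tgt (es i) = vs i.succ
  hinj : Function.Injective vs
  hext : G.ExtendsFwd vs es

instance : MulAction G.Aut (G.FwdExtWalk n) where
  smul φ p := ⟨φ.vmap ∘ p.vs, φ.emap ∘ p.es, fun i => by simp [φ.src_eq, p.hsrc i],
    fun i => by simp [φ.tgt_eq, p.htgt i], φ.vmap.injective.comp p.hinj, p.hext.map φ⟩
  one_smul _ := rfl
  mul_smul _ _ _ := rfl

namespace FwdExtWalk

def start : G.FwdExtWalk n →[G.Aut] G.V where
  toFun p := p.vs 0
  map_smul' _ _ := rfl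

def finish : G.FwdExtWalk n →[G.Aut] G.V where
  toFun p := p.vs (Fin.last n)
  map_smul' _ _ := rfl

def reverse (p : G.FwdExtWalk n) {v : G.V} (hv : finish p = v) : G.rev.SAW n v where
  vs i := p.vs i.rev
  es i := p.es i.rev
  hsrc i := show G.tgt _ = _ by rw [Fin.rev_castSucc]; exact p.htgt i.rev
  htgt i := show G.src _ = _ by rw [Fin.rev_succ]; exact p.hsrc i.rev
  hstart := show p.vs _ = v by rw [Fin.rev_zero]; exact hv
  hinj := p.hinj.comp Fin.rev_injective

theorem isBwdExt_reverse (p : G.FwdExtWalk n) {v : G.V} (hv : finish p = v) :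
    G.rev.IsBwdExt (p.reverse hv) :=
  (isBwdExt_rev_iff _).mpr (by simpa only [reverse, Fin.rev_rev] using p.hext)

end FwdExtWalk

open FwdExtWalk

def SAW.reverse {v : G.V} (w : G.rev.SAW n v) (hw : G.rev.IsBwdExt w) : G.FwdExtWalk n where
  vs i := w.vs i.rev
  es i := w.es i.rev
  hsrc i := show G.rev.tgt _ = _ by rw [Fin.rev_castSucc]; exact w.htgt i.rev
  htgt i := show G.rev.src _ = _ by rw [Fin.rev_succ]; exact w.hsrc i.rev
  hinj := w.hinj.comp Fin.rev_injective
  hext := (isBwdExt_rev_iff w).mp hw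

def startFiberEquiv (v : G.V) :
    {p : G.FwdExtWalk n | start p = v} ≃ {w : G.SAW n v // G.IsFwdExt w} where
  toFun p := ⟨⟨p.1.vs, p.1.es, p.1.hsrc, p.1.htgt, p.2, p.1.hinj⟩, p.1.hext⟩
  invFun w := ⟨⟨w.1.vs, w.1.es, w.1.hsrc, w.1.htgt, w.1.hinj, w.2⟩, w.1.hstart⟩
  left_inv _ := rfl
  right_inv _ := rfl

def finishFiberEquiv (v : G.V) :
    {p : G.FwdExtWalk n | finish p = v} ≃ {w : G.rev.SAW n v // G.rev.IsBwdExt w} where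
  toFun p := ⟨p.1.reverse p.2, p.1.isBwdExt_reverse p.2⟩
  invFun w := ⟨w.1.reverse w.2,
    show w.1.vs (Fin.last n).rev = v by rw [Fin.rev_last]; exact w.1.hstart⟩
  left_inv p := Subtype.ext (FwdExtWalk.ext (funext fun i => congrArg p.1.vs i.rev_rev)
    (funext fun i => congrArg p.1.es i.rev_rev))
  right_inv w := Subtype.ext (SAW.ext (funext fun i => congrArg w.1.vs i.rev_rev)
    (funext fun i => congrArg w.1.es i.rev_rev))

theorem finite_start_fiber (hlf : G.LocallyFinite) (v : G.V) :
    {p : G.FwdExtWalk n | start p = v}.Finite := by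
  have := SAW.finite (n := n) (fun u => (hlf u).1) v
  exact Set.finite_coe_iff.mp (Finite.of_equiv _ (startFiberEquiv v).symm)

theorem finite_finish_fiber (hlf : G.LocallyFinite) (v : G.V) :
    {p : G.FwdExtWalk n | finish p = v}.Finite := by
  have := SAW.finite (G := G.rev) (n := n) (fun u => (hlf u).2) v
  exact Set.finite_coe_iff.mp (Finite.of_equiv _ (finishFiberEquiv v).symm)

theorem ssigmaF_eq_iSup_ncard (n : ℕ) :
    G.ssigmaF n = ⨆ v, ({p : G.FwdExtWalk n | start p = v}.ncard : ℝ≥0∞) := by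
  refine iSup_congr fun v => ?_
  rw [sigmaF, ← Nat.card_coe_set_eq, Nat.card_congr (startFiberEquiv v)]

theorem ssigmaB_rev_eq_iSup_ncard (n : ℕ) :
    G.rev.ssigmaB n = ⨆ v, ({p : G.FwdExtWalk n | finish p = v}.ncard : ℝ≥0∞) := by
  refine iSup_congr fun v => ?_
  rw [sigmaB, ← Nat.card_coe_set_eq]
  exact congrArg _ (Nat.card_congr (finishFiberEquiv (G := G) v)).symm

end Dgraph

theorem ssigmaF_comparable_ssigmaB_rev_general (G : Dgraph)
    (hlf : G.LocallyFinite) (hsc : G.StronglyConnected) (hqt : G.QuasiTransitive)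
    (huni : G.Unimodular) :
    ∃ C : ℝ≥0∞, 1 ≤ C ∧ C ≠ ⊤ ∧
      (∀ n : ℕ, G.ssigmaF n ≤ C * (G.rev).ssigmaB n ∧ (G.rev).ssigmaB n ≤ C * G.ssigmaF n) ∧
      (G.VertexTransitive → ∀ n : ℕ, G.ssigmaF n = (G.rev).ssigmaB n) := by
  obtain ⟨S, hS⟩ := hqt
  have hfin := Dgraph.finiteStabilizerOrbits hlf hsc
  set C := (S ×ˢ S).sup (fun q => (MulAction.stabilizer G.Aut q.2).relIndex
    (MulAction.stabilizer G.Aut q.1)) * S.card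
  have hC : (C : ℝ≥0∞) ≤ C + 1 := le_self_add
  refine ⟨C + 1, le_add_self, by simp, fun n => ⟨?_, ?_⟩, fun hvt n => ?_⟩
    <;> rw [Dgraph.ssigmaF_eq_iSup_ncard, Dgraph.ssigmaB_rev_eq_iSup_ncard]
  · exact (huni.isUnimodular.iSup_ncard_fiber_le hfin _ _ hS (Dgraph.finite_start_fiber hlf)
      (Dgraph.finite_finish_fiber hlf)).trans (mul_le_mul_left hC _)
  · exact (huni.isUnimodular.iSup_ncard_fiber_le hfin _ _ hS (Dgraph.finite_finish_fiber hlf)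
      (Dgraph.finite_start_fiber hlf)).trans (mul_le_mul_left hC _)
  · have : MulAction.IsPretransitive G.Aut G.V := ⟨hvt⟩
    simp only [huni.isUnimodular.ncard_fiber_eq hfin _ _ (Dgraph.finite_start_fiber hlf)
      (Dgraph.finite_finish_fiber hlf)]

/-- for unimodular `G`, there is `C ≥ 1` with
`C⁻¹ ≤ σ^F_n(G)/σ^B_n(Ḡ) ≤ C` for all `n`; if `G` is vertex-transitive one may take
`C = 1`, i.e. the two quantities agree. -/
theorem ssigmaF_comparable_ssigmaB_rev (G : Dgraph) (hinf : Infinite G.V)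
    (hlf : G.LocallyFinite) (hsc : G.StronglyConnected) (hqt : G.QuasiTransitive)
    (huni : G.Unimodular) :
    ∃ C : ℝ≥0∞, 1 ≤ C ∧ C ≠ ⊤ ∧
      (∀ n : ℕ, G.ssigmaF n ≤ C * (G.rev).ssigmaB n ∧ (G.rev).ssigmaB n ≤ C * G.ssigmaF n) ∧
      (G.VertexTransitive → ∀ n : ℕ, G.ssigmaF n = (G.rev).ssigmaB n) :=
  ssigmaF_comparable_ssigmaB_rev_general G hlf hsc hqt huni
end
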